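/- Let φ : ℝ → ℂ be continuously differentiable with φ ∈ L^∞(ℝ) and ∂_x φ ∈ L²(ℝ). Define a(t,x) = Σ_{j=1,2} λ_j (σ_j+1) t^{σ_j−2} |φ(x)|^{2σ_j} and b(t,x) = Σ_{j=1,2} λ_j σ_j t^{σ_j−2} |φ(x)|^{2σ_j−2} v_p(t,x)². Then for every ε > 0 there exists a constant C > 0, depending only on λ₁, λ₂, σ, ε, ‖φ‖_{L^∞} and ‖∂_x φ‖_{L²}, such that for all t ∈ (0,1]: sup_{x∈ℝ} ( |a(t,x)| + |b(t,x)| ) ≤ C t^{−1} and ‖∂_x a(t,·)‖_{L²(ℝ)} + ‖∂_x b(t,·)‖_{L²(ℝ)} ≤ C t^{−1−ε}. -/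

import Mathlib

/-!
Since `φ` is continuous, its essential bound `M = ‖φ‖_∞` bounds it everywhere. With `r = |φ|²`
and `v = v_p`, one has `|v|² = r ≤ M²` and `|r'| ≤ 2M|φ'|`. Rewriting
`a = 2λ₁t⁻¹r + λ₂(σ+1)t^{σ-2}r^σ` and `b = λ₁t⁻¹v² + λ₂σt^{σ-2}|v|^{2(σ-1)}v²`, and using
`t^{σ-2} ≤ t⁻¹` on `(0,1]`, the pointwise bounds and `|∂ₓa| ≲ t⁻¹|φ'|` are immediate.
Differentiating the phase of `v = e^{iθ} conj φ` costs `|θ'| ≲ (1 + |log t|)|φ'|`, which gives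
`|∂ₓb| ≲ (1 + |log t|) t⁻¹ |φ'|`; the loss `t^{-ε}` in the `L²` bound comes from
`|log t| ≤ ε⁻¹ t^{-ε}`. Although `|z|^{2(σ-1)}` is not differentiable at `0` for `σ < 2`,
`|z|^{2(σ-1)} z²` is, because `z²` vanishes to second order there.
-/

open MeasureTheory Complex ENNReal

/-- The asymptotic profile
`v_p(t,x) = exp(−iλ₁|φ(x)|² log t − i(λ₂/(σ−1))|φ(x)|^{2σ} t^{σ−1}) conj(φ(x))`. -/
noncomputable def vp (lam1 lam2 σ : ℝ) (φ : ℝ → ℂ) (t x : ℝ) : ℂ :=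
  Complex.exp (-(Complex.I) * (↑lam1:ℂ) * (↑(‖φ x‖ ^ 2):ℂ) * (↑(Real.log t):ℂ)
      - Complex.I * (↑(lam2/(σ-1)):ℂ) * (↑(‖φ x‖ ^ (2*σ)):ℂ) * (↑(t ^ (σ-1)):ℂ))
    * (starRingEnd ℂ) (φ x)

/-- `a(t,x) = Σ_{j=1,2} λⱼ (σⱼ+1) t^{σⱼ−2} |φ(x)|^{2σⱼ}` with `σ₁ = 1`, `σ₂ = σ`. -/
noncomputable def potA (lam1 lam2 σ : ℝ) (φ : ℝ → ℂ) (t x : ℝ) : ℝ :=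
  lam1 * (1+1) * t ^ ((1:ℝ)-2) * ‖φ x‖ ^ (2*(1:ℝ))
  + lam2 * (σ+1) * t ^ (σ-2) * ‖φ x‖ ^ (2*σ)

/-- `b(t,x) = Σ_{j=1,2} λⱼ σⱼ t^{σⱼ−2} |φ(x)|^{2σⱼ−2} v_p(t,x)²` with `σ₁ = 1`, `σ₂ = σ`,
`|φ(x)|^{2σ₁−2}` understood as `1`. -/
noncomputable def potB (lam1 lam2 σ : ℝ) (φ : ℝ → ℂ) (t x : ℝ) : ℂ :=
  (↑(lam1 * 1 * t ^ ((1:ℝ)-2) * ‖φ x‖ ^ (2*(1:ℝ)-2)):ℂ) * (vp lam1 lam2 σ φ t x) ^ 2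
  + (↑(lam2 * σ * t ^ (σ-2) * ‖φ x‖ ^ (2*σ-2)):ℂ) * (vp lam1 lam2 σ φ t x) ^ 2

open Filter Topology ComplexConjugate

theorem rpow_two_mul_eq_sq_rpow {a : ℝ} (ha : 0 ≤ a) (s : ℝ) : a ^ (2 * s) = (a ^ 2) ^ s := by
  simpa using Real.rpow_natCast_mul ha 2 s

theorem rpow_two_mul_sub_two_eq_sq_rpow {a : ℝ} (ha : 0 ≤ a) (s : ℝ) :
    a ^ (2 * s - 2) = (a ^ 2) ^ (s - 1) := by
  rw [← rpow_two_mul_eq_sq_rpow ha]; ring_nf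

theorem Continuous.enorm_le_eLpNorm_top {X E : Type*} [TopologicalSpace X] [MeasurableSpace X]
    {μ : Measure X} [μ.IsOpenPosMeasure] [NormedAddCommGroup E] {f : X → E}
    (hf : Continuous f) (x : X) : ‖f x‖ₑ ≤ eLpNorm f ⊤ μ := by
  have hclosed : IsClosed {x | ‖f x‖ₑ ≤ eLpNorm f ⊤ μ} := isClosed_le hf.enorm continuous_const
  have hdense : Dense {x | ‖f x‖ₑ ≤ eLpNorm f ⊤ μ} :=
    Measure.dense_of_ae (μ := μ) (by simpa only [eLpNorm_exponent_top] using ae_le_eLpNormEssSup)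
  exact hclosed.closure_subset (hdense.closure_eq ▸ Set.mem_univ x)

theorem Continuous.norm_le_toReal_eLpNorm_top {X E : Type*} [TopologicalSpace X] [MeasurableSpace X]
    {μ : Measure X} [μ.IsOpenPosMeasure] [NormedAddCommGroup E] {f : X → E}
    (hf : Continuous f) (hf' : MemLp f ⊤ μ) (x : X) : ‖f x‖ ≤ (eLpNorm f ⊤ μ).toReal := by
  simpa using ENNReal.toReal_mono hf'.eLpNorm_ne_top (hf.enorm_le_eLpNorm_top (μ := μ) x)

theorem HasDerivAt.mul_of_isBigO_one {h g : ℝ → ℂ} {x : ℝ}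
    (hh : h =O[𝓝 x] (fun _ => (1 : ℝ))) (hg : HasDerivAt g 0 x) (hgx : g x = 0) :
    HasDerivAt (fun y => h y * g y) 0 x := by
  rw [hasDerivAt_iff_isLittleO] at hg ⊢
  simpa [hgx] using hh.mul_isLittleO hg

theorem exists_hasDerivAt_exp_mul_I_mul_conj {θ : ℝ → ℝ} {g : ℝ → ℂ} {θ' : ℝ} {g' : ℂ} {x : ℝ}
    (hθ : HasDerivAt θ θ' x) (hg : HasDerivAt g g' x) :
    ∃ D, HasDerivAt (fun y => exp (θ y * I) * conj (g y)) D x ∧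
      ‖D‖ ≤ |θ'| * ‖g x‖ + ‖g'‖ := by
  have hconj : HasDerivAt (fun y => conj (g y)) (conj g') x := hg.star
  refine ⟨_, ((hθ.ofReal_comp.mul_const I).cexp).mul hconj, ?_⟩
  calc _ ≤ ‖exp (θ x * I) * (θ' * I) * conj (g x)‖ + ‖exp (θ x * I) * conj g'‖ := norm_add_le _ _
    _ = |θ'| * ‖g x‖ + ‖g'‖ := by simp [norm_exp_ofReal_mul_I]

theorem exists_hasDerivAt_mul_norm_sq_add_mul_rpow {F : Type*} [NormedAddCommGroup F]
    [InnerProductSpace ℝ F] {f : ℝ → F} {f' : F} {x : ℝ} (hf : HasDerivAt f f' x)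
    (c₁ c₂ : ℝ) {s : ℝ} (hs : 1 ≤ s) :
    ∃ D, HasDerivAt (fun y => c₁ * ‖f y‖ ^ 2 + c₂ * (‖f y‖ ^ 2) ^ s) D x ∧
      |D| ≤ (|c₁| + |c₂| * s * (‖f x‖ ^ 2) ^ (s - 1)) * (2 * ‖f x‖ * ‖f'‖) := by
  have hr := hf.norm_sq
  refine ⟨_, (hr.const_mul c₁).add ((hr.rpow_const (Or.inr hs)).const_mul c₂), ?_⟩
  have hinner : |inner ℝ (f x) f'| ≤ ‖f x‖ * ‖f'‖ := abs_real_inner_le_norm _ _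
  have hs0 : 0 ≤ s := by linarith
  refine (abs_add_le _ _).trans ?_
  simp only [abs_mul, abs_two, abs_of_nonneg hs0,
    abs_of_nonneg (Real.rpow_nonneg (sq_nonneg ‖f x‖) _)]
  calc _ = (|c₁| + |c₂| * s * (‖f x‖ ^ 2) ^ (s - 1)) * (2 * |inner ℝ (f x) f'|) := by ring
    _ ≤ _ := by rw [mul_assoc 2]; gcongr

theorem exists_hasDerivAt_rpow_norm_sq_mul_sq {f : ℝ → ℂ} {f' : ℂ} {x : ℝ}
    (hf : HasDerivAt f f' x) {s : ℝ} (hs : 0 ≤ s) :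
    ∃ D, HasDerivAt (fun y => (((‖f y‖ ^ 2) ^ s : ℝ) : ℂ) * f y ^ 2) D x ∧
      ‖D‖ ≤ 2 * (s + 1) * (‖f x‖ ^ 2) ^ s * ‖f x‖ * ‖f'‖ := by
  have hsq := hf.fun_pow 2
  by_cases hfx : f x = 0
  · refine ⟨0, HasDerivAt.mul_of_isBigO_one ?_ (by simpa [hfx] using hsq) (by simp [hfx]),
      by simp [hfx]⟩
    have hcont : ContinuousAt (fun y => (‖f y‖ ^ 2) ^ s) x :=
      (hf.continuousAt.norm.pow 2).rpow_const (Or.inr hs)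
    exact (Complex.continuous_ofReal.continuousAt.comp hcont).tendsto.isBigO_one ℝ
  · have hr0 : ‖f x‖ ^ 2 ≠ 0 := by positivity
    have hrs := (hf.norm_sq.rpow_const (p := s) (Or.inl hr0)).ofReal_comp
    refine ⟨_, hrs.mul hsq, ?_⟩
    have hinner : |inner ℝ (f x) f'| ≤ ‖f x‖ * ‖f'‖ := abs_real_inner_le_norm _ _
    have hpow : (‖f x‖ ^ 2) ^ (s - 1) * ‖f x‖ ^ 2 = (‖f x‖ ^ 2) ^ s := by
      rw [Real.rpow_sub_one hr0, div_mul_cancel₀ _ hr0]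
    calc _ ≤ ‖(((2 * inner ℝ (f x) f' * s * (‖f x‖ ^ 2) ^ (s - 1) : ℝ)) : ℂ) * f x ^ 2‖
          + ‖(((‖f x‖ ^ 2) ^ s : ℝ) : ℂ) * ((2 : ℕ) * f x ^ (2 - 1) * f')‖ := norm_add_le _ _
      _ = 2 * s * |inner ℝ (f x) f'| * ((‖f x‖ ^ 2) ^ (s - 1) * ‖f x‖ ^ 2)
          + 2 * (‖f x‖ ^ 2) ^ s * ‖f x‖ * ‖f'‖ := by
        simp only [norm_mul, norm_real, Real.norm_eq_abs, norm_pow, abs_two,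
          abs_of_nonneg hs, abs_of_nonneg (Real.rpow_nonneg (sq_nonneg ‖f x‖) _)]
        norm_num
        ring
      _ ≤ _ := by
        rw [hpow]
        nlinarith [mul_le_mul_of_nonneg_left hinner (by positivity : 0 ≤ 2 * s * (‖f x‖ ^ 2) ^ s)]

theorem one_add_abs_log_mul_rpow_neg_one_le {t ε : ℝ} (ht0 : 0 < t) (ht1 : t ≤ 1) (hε : 0 < ε) :
    (1 + |Real.log t|) * t ^ (-1 : ℝ) ≤ (1 + ε⁻¹) * t ^ (-1 - ε) := by
  have hlog : |Real.log t| ≤ ε⁻¹ * t ^ (-ε) := by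
    rw [abs_of_nonpos (Real.log_nonpos ht0.le ht1), ← Real.log_inv]
    have := Real.log_le_rpow_div (inv_nonneg.2 ht0.le) hε
    rwa [Real.inv_rpow ht0.le, ← Real.rpow_neg ht0.le, div_eq_inv_mul] at this
  have hone : 1 ≤ t ^ (-ε) := Real.one_le_rpow_of_pos_of_le_one_of_nonpos ht0 ht1 (by linarith)
  calc (1 + |Real.log t|) * t ^ (-1 : ℝ) ≤ (1 + ε⁻¹) * t ^ (-ε) * t ^ (-1 : ℝ) := by
        gcongr
        nlinarith
    _ = (1 + ε⁻¹) * t ^ (-1 - ε) := by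
      rw [mul_assoc, ← Real.rpow_add ht0]
      ring_nf

theorem eLpNorm_add_eLpNorm_le_of_norm_le {α E F G : Type*} [MeasurableSpace α] {μ : Measure α}
    [NormedAddCommGroup E] [NormedAddCommGroup F] [NormedAddCommGroup G]
    {f : α → E} {g : α → F} {h : α → G} {p : ℝ≥0∞} {c₁ c₂ : ℝ} (hc₁ : 0 ≤ c₁) (hc₂ : 0 ≤ c₂)
    (hh : eLpNorm h p μ ≠ ⊤) (hf : ∀ x, ‖f x‖ ≤ c₁ * ‖h x‖) (hg : ∀ x, ‖g x‖ ≤ c₂ * ‖h x‖) :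
    eLpNorm f p μ + eLpNorm g p μ ≤ ENNReal.ofReal ((c₁ + c₂) * (eLpNorm h p μ).toReal) := by
  calc _ ≤ ENNReal.ofReal c₁ * eLpNorm h p μ + ENNReal.ofReal c₂ * eLpNorm h p μ :=
        add_le_add (eLpNorm_le_mul_eLpNorm_of_ae_le_mul (ae_of_all _ hf) p)
          (eLpNorm_le_mul_eLpNorm_of_ae_le_mul (ae_of_all _ hg) p)
    _ = _ := by
      rw [← add_mul, ← ofReal_add hc₁ hc₂, ofReal_mul (by positivity), ofReal_toReal hh]

noncomputable def vpPhase (lam1 lam2 σ : ℝ) (φ : ℝ → ℂ) (t x : ℝ) : ℝ :=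
  -(lam1 * Real.log t) * ‖φ x‖ ^ 2 + -(lam2 / (σ - 1) * t ^ (σ - 1)) * (‖φ x‖ ^ 2) ^ σ

section

variable (lam1 lam2 σ : ℝ) (φ : ℝ → ℂ) (t : ℝ)

theorem vp_eq_exp_mul_conj (x : ℝ) :
    vp lam1 lam2 σ φ t x = exp (vpPhase lam1 lam2 σ φ t x * I) * conj (φ x) := by
  rw [vp, vpPhase, rpow_two_mul_eq_sq_rpow (norm_nonneg _)]
  push_cast
  ring_nf

theorem norm_vp (x : ℝ) : ‖vp lam1 lam2 σ φ t x‖ = ‖φ x‖ := by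
  simp [vp_eq_exp_mul_conj, norm_exp_ofReal_mul_I]

theorem potA_eq : potA lam1 lam2 σ φ t = fun x =>
    2 * lam1 * t ^ (-1 : ℝ) * ‖φ x‖ ^ 2 + lam2 * (σ + 1) * t ^ (σ - 2) * (‖φ x‖ ^ 2) ^ σ := by
  ext x
  rw [potA, rpow_two_mul_eq_sq_rpow (norm_nonneg _), rpow_two_mul_eq_sq_rpow (norm_nonneg _),
    Real.rpow_one, show (1 : ℝ) - 2 = -1 by norm_num]
  ring

theorem potB_eq : potB lam1 lam2 σ φ t = fun x =>
    ((lam1 * t ^ (-1 : ℝ) : ℝ) : ℂ) *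
        (((‖vp lam1 lam2 σ φ t x‖ ^ 2) ^ (1 - 1 : ℝ) : ℝ) * vp lam1 lam2 σ φ t x ^ 2) +
      ((lam2 * σ * t ^ (σ - 2) : ℝ) : ℂ) *
        (((‖vp lam1 lam2 σ φ t x‖ ^ 2) ^ (σ - 1) : ℝ) * vp lam1 lam2 σ φ t x ^ 2) := by
  ext x
  rw [potB, norm_vp, rpow_two_mul_sub_two_eq_sq_rpow (norm_nonneg _),
    rpow_two_mul_sub_two_eq_sq_rpow (norm_nonneg _), show (1 : ℝ) - 2 = -1 by norm_num]
  push_cast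
  ring

end

section

variable {lam1 lam2 σ : ℝ} {φ : ℝ → ℂ} {M t : ℝ}

theorem rpow_sub_two_le_rpow_neg_one (hσ : 1 ≤ σ) (ht0 : 0 < t) (ht1 : t ≤ 1) :
    t ^ (σ - 2) ≤ t ^ (-1 : ℝ) :=
  Real.rpow_le_rpow_of_exponent_ge ht0 ht1 (by linarith)

theorem abs_potA_le (hσ : 1 ≤ σ) (hM : ∀ x, ‖φ x‖ ≤ M) (ht0 : 0 < t) (ht1 : t ≤ 1) (x : ℝ) :
    |potA lam1 lam2 σ φ t x| ≤
      (2 * |lam1| * M ^ 2 + |lam2| * (σ + 1) * (M ^ 2) ^ σ) * t ^ (-1 : ℝ) := by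
  have hts := rpow_sub_two_le_rpow_neg_one hσ ht0 ht1
  rw [potA_eq]
  refine (abs_add_le _ _).trans ?_
  simp only [abs_mul, abs_two, abs_pow, abs_norm, abs_of_pos (Real.rpow_pos_of_pos ht0 _),
    abs_of_nonneg (Real.rpow_nonneg (sq_nonneg ‖φ x‖) _), abs_of_pos (by linarith : 0 < σ + 1)]
  calc _ ≤ 2 * |lam1| * t ^ (-1 : ℝ) * M ^ 2 + |lam2| * (σ + 1) * t ^ (-1 : ℝ) * (M ^ 2) ^ σ := by
        have := hM x
        gcongr
    _ = _ := by ring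

theorem norm_potB_le (hσ : 1 ≤ σ) (hM : ∀ x, ‖φ x‖ ≤ M) (ht0 : 0 < t) (ht1 : t ≤ 1) (x : ℝ) :
    ‖potB lam1 lam2 σ φ t x‖ ≤
      (|lam1| * M ^ 2 + |lam2| * σ * (M ^ 2) ^ (σ - 1) * M ^ 2) * t ^ (-1 : ℝ) := by
  have hts := rpow_sub_two_le_rpow_neg_one hσ ht0 ht1
  have hv : ‖vp lam1 lam2 σ φ t x‖ ≤ M := norm_vp lam1 lam2 σ φ t x ▸ hM x
  rw [potB_eq]
  refine (norm_add_le _ _).trans ?_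
  simp only [norm_mul, norm_real, norm_pow, Real.norm_eq_abs,
    abs_of_pos (Real.rpow_pos_of_pos ht0 _), abs_of_pos (by linarith : 0 < σ),
    abs_of_nonneg (Real.rpow_nonneg (sq_nonneg ‖vp lam1 lam2 σ φ t x‖) _),
    sub_self, Real.rpow_zero, abs_one, one_mul]
  calc _ ≤ |lam1| * t ^ (-1 : ℝ) * M ^ 2 +
        |lam2| * σ * t ^ (-1 : ℝ) * ((M ^ 2) ^ (σ - 1) * M ^ 2) := by
        gcongr
    _ = _ := by ring

theorem abs_deriv_potA_le (hσ : 1 ≤ σ) (hφ : Differentiable ℝ φ) (hM : ∀ x, ‖φ x‖ ≤ M)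
    (ht0 : 0 < t) (ht1 : t ≤ 1) (x : ℝ) :
    |deriv (potA lam1 lam2 σ φ t) x| ≤
      (2 * |lam1| + |lam2| * (σ + 1) * σ * (M ^ 2) ^ (σ - 1)) * (2 * M) * t ^ (-1 : ℝ) *
        ‖deriv φ x‖ := by
  have hts := rpow_sub_two_le_rpow_neg_one hσ ht0 ht1
  obtain ⟨D, hD, hDle⟩ := exists_hasDerivAt_mul_norm_sq_add_mul_rpow (hφ x).hasDerivAt
    (2 * lam1 * t ^ (-1 : ℝ)) (lam2 * (σ + 1) * t ^ (σ - 2)) hσ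
  rw [potA_eq, hD.deriv]
  refine hDle.trans ?_
  simp only [abs_mul, abs_two, abs_of_pos (Real.rpow_pos_of_pos ht0 _),
    abs_of_pos (by linarith : 0 < σ + 1)]
  calc _ ≤ (2 * |lam1| * t ^ (-1 : ℝ) + |lam2| * (σ + 1) * t ^ (-1 : ℝ) * σ * (M ^ 2) ^ (σ - 1)) *
        (2 * M * ‖deriv φ x‖) := by
        have := hM x
        gcongr
    _ = _ := by ring

theorem exists_hasDerivAt_vp (hσ : 1 < σ) (hφ : Differentiable ℝ φ) (hM : ∀ x, ‖φ x‖ ≤ M)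
    (ht0 : 0 < t) (ht1 : t ≤ 1) (x : ℝ) :
    ∃ D, HasDerivAt (vp lam1 lam2 σ φ t) D x ∧
      ‖D‖ ≤ (2 * M ^ 2 * (|lam1| + |lam2| / (σ - 1) * σ * (M ^ 2) ^ (σ - 1)) + 1) *
        (1 + |Real.log t|) * ‖deriv φ x‖ := by
  obtain ⟨θ', hθ, hθle⟩ := exists_hasDerivAt_mul_norm_sq_add_mul_rpow (hφ x).hasDerivAt
    (-(lam1 * Real.log t)) (-(lam2 / (σ - 1) * t ^ (σ - 1))) hσ.le
  obtain ⟨D, hD, hDle⟩ := exists_hasDerivAt_exp_mul_I_mul_conj hθ (hφ x).hasDerivAt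
  refine ⟨D, ?_, hDle.trans ?_⟩
  · convert hD using 1
    ext y
    rw [vp_eq_exp_mul_conj]
    rfl
  have hσ0 : 0 < σ - 1 := by linarith
  have htσ : t ^ (σ - 1) ≤ 1 := Real.rpow_le_one ht0.le ht1 hσ0.le
  simp only [abs_neg, abs_mul, abs_div, abs_of_pos hσ0,
    abs_of_pos (Real.rpow_pos_of_pos ht0 _)] at hθle
  set L := |Real.log t|
  set Q := |lam2| / (σ - 1) * σ * (M ^ 2) ^ (σ - 1)
  have hM0 : 0 ≤ M := (norm_nonneg _).trans (hM x)
  have hθ' : |θ'| ≤ (|lam1| * L + Q) * (2 * M * ‖deriv φ x‖) := by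
    refine hθle.trans ?_
    have := hM x
    gcongr
    calc |lam2| / (σ - 1) * t ^ (σ - 1) * σ * (‖φ x‖ ^ 2) ^ (σ - 1)
        ≤ |lam2| / (σ - 1) * 1 * σ * (M ^ 2) ^ (σ - 1) := by gcongr
      _ = Q := by ring
  calc _ ≤ |θ'| * M + ‖deriv φ x‖ := by gcongr; exact hM x
    _ ≤ (|lam1| * L + Q) * (2 * M * ‖deriv φ x‖) * M + ‖deriv φ x‖ := by gcongr
    _ ≤ _ := by
      rw [← sub_nonneg]
      have hL : 0 ≤ L := abs_nonneg _
      have : (2 * M ^ 2 * (|lam1| + Q) + 1) * (1 + L) * ‖deriv φ x‖ -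
          ((|lam1| * L + Q) * (2 * M * ‖deriv φ x‖) * M + ‖deriv φ x‖) =
          (2 * M ^ 2 * (|lam1| + Q * L) + L) * ‖deriv φ x‖ := by ring
      rw [this]
      positivity

theorem norm_deriv_potB_le (hσ : 1 < σ) (hφ : Differentiable ℝ φ) (hM : ∀ x, ‖φ x‖ ≤ M)
    (ht0 : 0 < t) (ht1 : t ≤ 1) (x : ℝ) :
    ‖deriv (potB lam1 lam2 σ φ t) x‖ ≤
      2 * M * (|lam1| + |lam2| * σ ^ 2 * (M ^ 2) ^ (σ - 1)) *
        (2 * M ^ 2 * (|lam1| + |lam2| / (σ - 1) * σ * (M ^ 2) ^ (σ - 1)) + 1) *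
        ((1 + |Real.log t|) * t ^ (-1 : ℝ)) * ‖deriv φ x‖ := by
  have hts := rpow_sub_two_le_rpow_neg_one hσ.le ht0 ht1
  have hM0 : 0 ≤ M := (norm_nonneg _).trans (hM x)
  have hv : ‖vp lam1 lam2 σ φ t x‖ ≤ M := norm_vp lam1 lam2 σ φ t x ▸ hM x
  obtain ⟨v', hv', hv'le⟩ := exists_hasDerivAt_vp (lam1 := lam1) (lam2 := lam2) hσ hφ hM ht0 ht1 x
  obtain ⟨D₁, hD₁, hD₁le⟩ := exists_hasDerivAt_rpow_norm_sq_mul_sq hv' (sub_self (1 : ℝ)).ge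
  obtain ⟨D₂, hD₂, hD₂le⟩ := exists_hasDerivAt_rpow_norm_sq_mul_sq hv' (sub_nonneg.2 hσ.le)
  rw [potB_eq, ((hD₁.const_mul _).fun_add (hD₂.const_mul _)).deriv]
  simp only [sub_self, zero_add, Real.rpow_zero, mul_one, sub_add_cancel] at hD₁le hD₂le
  refine (norm_add_le _ _).trans ?_
  simp only [norm_mul, norm_real, Real.norm_eq_abs, abs_of_pos (Real.rpow_pos_of_pos ht0 _),
    abs_of_pos (by linarith : 0 < σ)]
  calc _ ≤ |lam1| * t ^ (-1 : ℝ) * (2 * M * ‖v'‖) +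
        |lam2| * σ * t ^ (-1 : ℝ) * (2 * σ * (M ^ 2) ^ (σ - 1) * M * ‖v'‖) := by
        gcongr
        · exact hD₁le.trans (by gcongr)
        · exact hD₂le.trans (by gcongr)
    _ = 2 * M * (|lam1| + |lam2| * σ ^ 2 * (M ^ 2) ^ (σ - 1)) * t ^ (-1 : ℝ) * ‖v'‖ := by ring
    _ ≤ 2 * M * (|lam1| + |lam2| * σ ^ 2 * (M ^ 2) ^ (σ - 1)) * t ^ (-1 : ℝ) *
        ((2 * M ^ 2 * (|lam1| + |lam2| / (σ - 1) * σ * (M ^ 2) ^ (σ - 1)) + 1) *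
          (1 + |Real.log t|) * ‖deriv φ x‖) := by gcongr
    _ = _ := by ring

theorem exists_eLpNorm_deriv_potA_add_eLpNorm_deriv_potB_le (hσ : 1 < σ)
    (hφ : Differentiable ℝ φ) (hM : ∀ x, ‖φ x‖ ≤ M) (hφ' : MemLp (deriv φ) 2 volume)
    {ε : ℝ} (hε : 0 < ε) :
    ∃ K ≥ 0, ∀ t, 0 < t → t ≤ 1 →
      eLpNorm (deriv (potA lam1 lam2 σ φ t)) 2 volume +
          eLpNorm (deriv (potB lam1 lam2 σ φ t)) 2 volume ≤
        ENNReal.ofReal (K * t ^ (-1 - ε)) := by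
  have hM0 : 0 ≤ M := (norm_nonneg _).trans (hM 0)
  set KA := (2 * |lam1| + |lam2| * (σ + 1) * σ * (M ^ 2) ^ (σ - 1)) * (2 * M)
  set KB := 2 * M * (|lam1| + |lam2| * σ ^ 2 * (M ^ 2) ^ (σ - 1)) *
    (2 * M ^ 2 * (|lam1| + |lam2| / (σ - 1) * σ * (M ^ 2) ^ (σ - 1)) + 1)
  refine ⟨(KA + KB) * (1 + ε⁻¹) * (eLpNorm (deriv φ) 2 volume).toReal, by positivity,
    fun t ht0 ht1 => ?_⟩
  have hlog := one_add_abs_log_mul_rpow_neg_one_le ht0 ht1 hε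
  have htinv : t ^ (-1 : ℝ) ≤ (1 + |Real.log t|) * t ^ (-1 : ℝ) :=
    le_mul_of_one_le_left (by positivity) (by simp)
  refine (eLpNorm_add_eLpNorm_le_of_norm_le (c₁ := KA * ((1 + ε⁻¹) * t ^ (-1 - ε)))
    (c₂ := KB * ((1 + ε⁻¹) * t ^ (-1 - ε))) (by positivity) (by positivity) hφ'.eLpNorm_ne_top
    (fun x => ?_) (fun x => ?_)).trans_eq (by ring_nf)
  · refine (abs_deriv_potA_le hσ.le hφ hM ht0 ht1 x).trans ?_
    gcongr
    exact htinv.trans hlog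
  · refine (norm_deriv_potB_le hσ hφ hM ht0 ht1 x).trans ?_
    gcongr

end

theorem potential_bounds_general (lam1 lam2 σ : ℝ) (hσ1 : 1 < σ) (φ : ℝ → ℂ)
    (hφ : ContDiff ℝ 1 φ) (hinf : MemLp φ ⊤ volume)
    (hd2 : MemLp (deriv φ) 2 volume) :
    ∀ ε > 0, ∃ C > 0, ∀ t : ℝ, 0 < t → t ≤ 1 →
      (∀ x : ℝ, |potA lam1 lam2 σ φ t x| + ‖potB lam1 lam2 σ φ t x‖
          ≤ C * t ^ (-1:ℝ)) ∧
      eLpNorm (deriv (potA lam1 lam2 σ φ t)) 2 volume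
          + eLpNorm (deriv (potB lam1 lam2 σ φ t)) 2 volume
        ≤ ENNReal.ofReal (C * t ^ (-1-ε : ℝ)) := by
  intro ε hε
  set M := (eLpNorm φ ⊤ volume).toReal
  have hM : ∀ x, ‖φ x‖ ≤ M := hφ.continuous.norm_le_toReal_eLpNorm_top hinf
  set S := 2 * |lam1| * M ^ 2 + |lam2| * (σ + 1) * (M ^ 2) ^ σ +
    (|lam1| * M ^ 2 + |lam2| * σ * (M ^ 2) ^ (σ - 1) * M ^ 2)
  have hS : 0 ≤ S := by positivity
  obtain ⟨K, hK0, hK⟩ := exists_eLpNorm_deriv_potA_add_eLpNorm_deriv_potB_le (lam1 := lam1)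
    (lam2 := lam2) hσ1 (hφ.differentiable one_ne_zero) hM hd2 hε
  refine ⟨S + K + 1, by positivity, fun t ht0 ht1 => ⟨fun x => ?_, (hK t ht0 ht1).trans ?_⟩⟩
  · calc _ ≤ S * t ^ (-1 : ℝ) := by
          linarith [abs_potA_le (lam1 := lam1) (lam2 := lam2) hσ1.le hM ht0 ht1 x,
            norm_potB_le (lam1 := lam1) (lam2 := lam2) hσ1.le hM ht0 ht1 x]
      _ ≤ _ := by gcongr; linarith
  · gcongr
    linarith

/-- bounds for the potential coefficients `a`, `b`:
`sup_x(|a|+|b|) ≤ C t⁻¹` and `‖∂ₓa‖_{L²} + ‖∂ₓb‖_{L²} ≤ C t^{−1−ε}` for `0 < t ≤ 1`. -/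
theorem potential_bounds (lam1 lam2 σ : ℝ) (hσ1 : 1 < σ) (hσ2 : σ < 2) (φ : ℝ → ℂ)
    (hφ : ContDiff ℝ 1 φ) (hinf : MemLp φ ⊤ volume)
    (hd2 : MemLp (deriv φ) 2 volume) :
    ∀ ε > 0, ∃ C > 0, ∀ t : ℝ, 0 < t → t ≤ 1 →
      (∀ x : ℝ, |potA lam1 lam2 σ φ t x| + ‖potB lam1 lam2 σ φ t x‖
          ≤ C * t ^ (-1:ℝ)) ∧
      eLpNorm (deriv (potA lam1 lam2 σ φ t)) 2 volume
          + eLpNorm (deriv (potB lam1 lam2 σ φ t)) 2 volume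
        ≤ ENNReal.ofReal (C * t ^ (-1-ε : ℝ)) :=
  potential_bounds_general lam1 lam2 σ hσ1 φ hφ hinf hd2
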